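/- arXiv:2506.23398 — 13 statements merged into one kernel-verified Lean document; each statement's English description precedes it below -/
import Mathlib

section
/- Let V be a vector space over a field F, let {a,b} = [a,b] + λ(a) + μ(b) + s be a bi-affine bracket on V with Leibnizian Λ, and fix o ∈ V. Then the bilinear bracket [−,−] satisfies the Leibniz rule [[a,b],c] = [[a,c],b] + [a,[b,c]] for all a,b,c ∈ V if and only if the linearization of Λ at o vanishes, i.e. Λ̃_o(a,b,c) = 0 for all a,b,c ∈ V. (Equivalently: the linearization of {−,−} at o makes the tangent space at o a Leibniz algebra iff the linearization of the Leibnizian at o vanishes.) -/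
/-!
The linearization at `o` is the third mixed difference in `a`, `b`, `c` at base point `o`:
it annihilates every term that does not depend on all three arguments. In the Leibnizian
of a bi-affine bracket the only such terms are the double brackets `[[·,·],·]`, and on them
the mixed difference is just evaluation at `a - o`, `b - o`, `c - o`. So the linearized
Leibnizian is the Leibnizian of `[-,-]` up to a translation of `V`.
-/

section Leibnizian

variable {V : Type*} [AddCommGroup V]

def leibnizian (br : V → V → V) (a b c : V) : V :=
  br a (br b c) - br (br a b) c + br (br a c) b

def linearizationAt (G : V → V → V → V) (o a b c : V) : V :=
  G a b c - G a b o - G a o c - G o b c + G a o o + G o b o + G o o c - G o o o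

end Leibnizian

theorem forall_sub_right_iff₃ {V : Type*} [AddGroup V] (o : V) (P : V → V → V → Prop) :
    (∀ a b c, P (a - o) (b - o) (c - o)) ↔ ∀ a b c, P a b c :=
  ⟨fun h a b c ↦ by simpa using h (a + o) (b + o) (c + o), fun h _ _ _ ↦ h _ _ _⟩

section BiAffine

variable {R V : Type*} [CommSemiring R] [AddCommGroup V] [Module R V]

theorem leibnizian_bilinear_eq_zero_iff (B : V →ₗ[R] V →ₗ[R] V) (a b c : V) :
    leibnizian (fun x y ↦ B x y) a b c = 0 ↔ B (B a b) c = B (B a c) b + B a (B b c) := by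
  rw [leibnizian, sub_add_eq_add_sub, sub_eq_zero, eq_comm, add_comm (B a (B b c))]

theorem linearizationAt_leibnizian_biAffine (B : V →ₗ[R] V →ₗ[R] V) (lam mu : V →ₗ[R] V)
    (s o a b c : V) :
    linearizationAt (leibnizian fun x y ↦ B x y + lam x + mu y + s) o a b c =
      leibnizian (fun x y ↦ B x y) (a - o) (b - o) (c - o) := by
  simp only [linearizationAt, leibnizian, map_add, map_sub, LinearMap.add_apply,
    LinearMap.sub_apply]
  abel

end BiAffine

/-- For the bi-affine bracket `{a,b} = B a b + lam a + mu b + s` on a vector space `V`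
with Leibnizian `Λ(a,b,c) = {a,{b,c}} − {{a,b},c} + {{a,c},b}` and a fixed point `o`,
the bilinear bracket `B` satisfies the Leibniz rule if and only if the linearization
of `Λ` at `o` vanishes. -/
theorem leibniz_rule_iff_leibnizian_linearization_vanishes
    {F V : Type*} [Field F] [AddCommGroup V] [Module F V]
    (B : V →ₗ[F] V →ₗ[F] V) (lam mu : V →ₗ[F] V) (s o : V)
    (br : V → V → V) (hbr : ∀ a b, br a b = B a b + lam a + mu b + s)
    (Λ : V → V → V → V)
    (hΛ : ∀ a b c, Λ a b c = br a (br b c) - br (br a b) c + br (br a c) b) :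
    (∀ a b c : V, B (B a b) c = B (B a c) b + B a (B b c)) ↔
      (∀ a b c : V,
        Λ a b c - Λ a b o - Λ a o c - Λ o b c
          + Λ a o o + Λ o b o + Λ o o c - Λ o o o = 0) := by
  obtain rfl : br = fun a b ↦ B a b + lam a + mu b + s := funext₂ hbr
  obtain rfl : Λ = leibnizian fun a b ↦ B a b + lam a + mu b + s := funext₃ hΛ
  change _ ↔ ∀ a b c, linearizationAt _ o a b c = 0
  simp only [linearizationAt_leibnizian_biAffine, leibnizian_bilinear_eq_zero_iff]
  exact (forall_sub_right_iff₃ o _).symm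
end

section
/- Let V be a vector space over a field F, let {a,b} = [a,b] + λ(a) + μ(b) + s be a bi-affine bracket on V with Leibnizian Λ. If there exists o ∈ V such that the linearization of Λ at o vanishes (Λ̃_o(a,b,c) = 0 for all a,b,c), then the linearization of Λ at every point u ∈ V vanishes (Λ̃_u(a,b,c) = 0 for all a,b,c). -/
/-!
Shifting the arguments by `u`, the bi-affine bracket becomes `B` plus affine terms, and all
the terms of its Leibnizian that are not trilinear cancel in the linearization at `u`, which
is therefore the Leibnizian of the bilinear part `B` evaluated at `(a - u, b - u, c - u)`.
Vanishing at one point `o` thus says that `B` satisfies the Leibniz identity, and this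
does not depend on the point.
-/

section Linearization

variable {V : Type*} [AddCommGroup V]

variable {R : Type*} [CommSemiring R] [Module R V]

theorem linearizationAt_leibnizian_biaffine (B : V →ₗ[R] V →ₗ[R] V) (lam mu : V →ₗ[R] V)
    (s u a b c : V) :
    linearizationAt (leibnizian fun x y => B x y + lam x + mu y + s) u a b c =
      leibnizian (fun x y => B x y) (a - u) (b - u) (c - u) := by
  simp only [linearizationAt, leibnizian, map_add, map_sub, LinearMap.add_apply,
    LinearMap.sub_apply]
  abel

theorem leibnizian_eq_zero_of_linearizationAt_biaffine_eq_zero (B : V →ₗ[R] V →ₗ[R] V)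
    (lam mu : V →ₗ[R] V) (s o : V)
    (ho : ∀ a b c, linearizationAt (leibnizian fun x y => B x y + lam x + mu y + s) o a b c = 0)
    (x y z : V) : leibnizian (fun x y => B x y) x y z = 0 := by
  simpa [linearizationAt_leibnizian_biaffine] using ho (x + o) (y + o) (z + o)

end Linearization

/-- For the bi-affine bracket `{a,b} = B a b + lam a + mu b + s` on a vector space `V`
with Leibnizian `Λ(a,b,c) = {a,{b,c}} − {{a,b},c} + {{a,c},b}`: if the linearization of
`Λ` vanishes at some point `o`, then it vanishes at every point `u`. -/
theorem leibnizian_linearization_vanishes_everywhere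
    {F V : Type*} [Field F] [AddCommGroup V] [Module F V]
    (B : V →ₗ[F] V →ₗ[F] V) (lam mu : V →ₗ[F] V) (s : V)
    (br : V → V → V) (hbr : ∀ a b, br a b = B a b + lam a + mu b + s)
    (Λ : V → V → V → V)
    (hΛ : ∀ a b c, Λ a b c = br a (br b c) - br (br a b) c + br (br a c) b)
    (o : V)
    (ho : ∀ a b c : V,
      Λ a b c - Λ a b o - Λ a o c - Λ o b c
        + Λ a o o + Λ o b o + Λ o o c - Λ o o o = 0) :
    ∀ u a b c : V,
      Λ a b c - Λ a b u - Λ a u c - Λ u b c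
        + Λ a u u + Λ u b u + Λ u u c - Λ u u u = 0 := by
  have hΛ_eq : Λ = leibnizian fun x y => B x y + lam x + mu y + s := by
    funext a b c
    simp only [hΛ, hbr, leibnizian]
  subst hΛ_eq
  intro u a b c
  change linearizationAt _ u a b c = 0
  rw [linearizationAt_leibnizian_biaffine]
  exact leibnizian_eq_zero_of_linearizationAt_biaffine_eq_zero B lam mu s o ho _ _ _
end

section
/- Let V be a vector space over a field F and let {a,b} = [a,b] + λ(a) + μ(b) + s be a bi-affine bracket on V. Then for all o, a, b ∈ V one has {a,b} − {a,o} + {o,o} − {o,b} = [a−o, b−o]. Consequently, for any two points o, u ∈ V the linearized brackets D_o(a,b) := {a,b} − {a,o} + {o,o} − {o,b} and D_u satisfy D_u(a,b) = D_o(a−u+o, b−u+o), so the translation x ↦ x − o + u intertwines the fibre brackets at o and at u; in particular, when [−,−] satisfies the Leibniz rule, all fibres of the Leibniz affgebra are Leibniz algebras isomorphic to (V, [−,−]). -/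
/-!
Bilinearity makes `{a,b} − {a,o} + {o,o} − {o,b}` equal to `[a−o, b−o]`: the affine parts
`λ(a)`, `μ(b)` and `s` each appear once with each sign. Hence the translation `x ↦ x − o` carries
the fibre at `o` (with addition `x + y − o` and bracket `D_o(x,y) + o`) isomorphically onto
`(V, +, [−,−])`, and any identity such as the Leibniz rule transports along it.
-/

namespace BiaffineBracket

variable {α β : Type*}

def SatisfiesLeibniz (add br : α → α → α) : Prop :=
  ∀ a b c, br (br a b) c = add (br (br a c) b) (br a (br b c))

theorem SatisfiesLeibniz.of_injective {add br : α → α → α} {add' br' : β → β → β}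
    (h : SatisfiesLeibniz add' br') {f : α → β} (hf : Function.Injective f)
    (hadd : ∀ x y, f (add x y) = add' (f x) (f y)) (hbr : ∀ x y, f (br x y) = br' (f x) (f y)) :
    SatisfiesLeibniz add br := fun a b c => hf <| by
  simpa only [hadd, hbr] using h (f a) (f b) (f c)

variable {R V : Type*} [CommSemiring R] [AddCommGroup V] [Module R V]

def fibre (br : V → V → V) (o a b : V) : V :=
  br a b - br a o + br o o - br o b

theorem fibre_biaffine (B : V →ₗ[R] V →ₗ[R] V) (lam mu : V → V) (s o a b : V) :
    fibre (fun a b => B a b + lam a + mu b + s) o a b = B (a - o) (b - o) := by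
  simp only [fibre, map_sub, LinearMap.sub_apply]
  abel

variable {D : V → V → V → V} {B : V →ₗ[R] V →ₗ[R] V}

theorem fibre_translate (hD : ∀ o a b, D o a b = B (a - o) (b - o)) (o u a b : V) :
    D u a b = D o (a - u + o) (b - u + o) := by
  simp only [hD, add_sub_cancel_right]

theorem satisfiesLeibniz_fibre (hD : ∀ o a b, D o a b = B (a - o) (b - o))
    (hL : SatisfiesLeibniz (· + ·) (fun a b => B a b)) (o : V) :
    SatisfiesLeibniz (fun x y => x + y - o) (fun x y => D o x y + o) :=
  hL.of_injective (f := (· - o)) sub_left_injective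
    (fun x y => by abel) (fun x y => by simp only [hD, add_sub_cancel_right])

end BiaffineBracket

/-- For the bi-affine bracket `{a,b} = B a b + lam a + mu b + s` and its fibre bracket
`D o a b = {a,b} − {a,o} + {o,o} − {o,b}` at a point `o`:
(i) `D o a b = B (a−o) (b−o)`;
(ii) the translation `x ↦ x − u + o` intertwines the fibre brackets:
`D u a b = D o (a−u+o) (b−u+o)`;
(iii) if `B` satisfies the Leibniz rule, then every fibre bracket `E_o x y := D o x y + o`
satisfies the Leibniz rule on the tangent space at `o` (whose addition is
`x +_o y = x + y − o`), so all fibres are Leibniz algebras isomorphic to `(V, B)`. -/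
theorem fibre_brackets_of_biaffine_bracket
    {F V : Type*} [Field F] [AddCommGroup V] [Module F V]
    (B : V →ₗ[F] V →ₗ[F] V) (lam mu : V →ₗ[F] V) (s : V)
    (br : V → V → V) (hbr : ∀ a b, br a b = B a b + lam a + mu b + s)
    (D : V → V → V → V)
    (hD : ∀ o a b, D o a b = br a b - br a o + br o o - br o b) :
    (∀ o a b : V, D o a b = B (a - o) (b - o)) ∧
    (∀ o u a b : V, D u a b = D o (a - u + o) (b - u + o)) ∧
    ((∀ a b c : V, B (B a b) c = B (B a c) b + B a (B b c)) →
      ∀ o a b c : V,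
        D o (D o a b + o) c + o =
          (D o (D o a c + o) b + o) + (D o a (D o b c + o) + o) - o) := by
  obtain rfl : br = fun a b => B a b + lam a + mu b + s := funext₂ hbr
  have hDB : ∀ o a b, D o a b = B (a - o) (b - o) := fun o a b =>
    (hD o a b).trans (BiaffineBracket.fibre_biaffine B lam mu s o a b)
  exact ⟨hDB, BiaffineBracket.fibre_translate hDB,
    fun hL o => BiaffineBracket.satisfiesLeibniz_fibre hDB hL o⟩
end

section
/- Let (L, [−,−]) and (L', [−,−]') be Leibniz algebras over a field F, λ, μ : L → L and λ', μ' : L' → L' linear maps, s ∈ L, s' ∈ L', and define the bi-affine brackets {a,b} = [a,b] + λ(a) + μ(b) + s on L and {x,y}' = [x,y]' + λ'(x) + μ'(y) + s' on L'. Then there exists an affine map φ : L → L' (i.e. φ(x) = ψ(x) + q' with ψ linear and q' ∈ L') satisfying φ({a,b}) = {φ(a), φ(b)}' for all a, b ∈ L if and only if there exist a linear map ψ : L → L' with ψ([a,b]) = [ψ(a), ψ(b)]' for all a,b, and a point q' ∈ L', such that for all a ∈ L: ψ(s) = s' + λ'(q') + μ'(q') + [q',q']' − q'; ψ(μ(a))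 = [q', ψ(a)]' + μ'(ψ(a)); and ψ(λ(a)) = [ψ(a), q']' + λ'(ψ(a)). -/
/-!
Writing `φ = ψ + q'` and expanding `{ψ a + q', ψ b + q'}'`, the difference
`φ {a, b} - {φ a, φ b}'` becomes a bilinear term in `(a, b)` plus a linear term in `a`,
a linear term in `b` and a constant. Such an expression vanishes identically iff each of
the four parts does (evaluate at `(0, 0)`, `(a, 0)`, `(0, b)`, `(a, b)`), and the four
vanishing conditions are exactly the four conditions on `ψ` and `q'`.
-/

section Polarization

variable {R M₁ M₂ N : Type*} [CommSemiring R] [AddCommMonoid M₁] [Module R M₁]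
  [AddCommMonoid M₂] [Module R M₂] [AddCommGroup N] [Module R N]

theorem LinearMap.biaffine_eq_zero_iff (P : M₁ →ₗ[R] M₂ →ₗ[R] N) (g : M₁ →ₗ[R] N)
    (h : M₂ →ₗ[R] N) (c : N) :
    (∀ a b, P a b + g a + h b + c = 0) ↔ P = 0 ∧ g = 0 ∧ h = 0 ∧ c = 0 := by
  refine ⟨fun H => ?_, fun ⟨hP, hg, hh, hc⟩ a b => by simp [hP, hg, hh, hc]⟩
  have hc : c = 0 := by simpa using H 0 0
  have hg : g = 0 := LinearMap.ext fun a => by simpa [hc] using H a 0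
  have hh : h = 0 := LinearMap.ext fun b => by simpa [hc] using H 0 b
  have hP : P = 0 := LinearMap.ext₂ fun a b => by simpa [hc, hg, hh] using H a b
  exact ⟨hP, hg, hh, hc⟩

end Polarization

section BiaffineBracket

variable {R L L' : Type*} [CommRing R] [AddCommGroup L] [Module R L]
  [AddCommGroup L'] [Module R L']

def biaffineBracket (B : L →ₗ[R] L →ₗ[R] L) (lam mu : L →ₗ[R] L) (s : L) (a b : L) : L :=
  B a b + lam a + mu b + s

variable (B : L →ₗ[R] L →ₗ[R] L) (B' : L' →ₗ[R] L' →ₗ[R] L')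
  (lam mu : L →ₗ[R] L) (lam' mu' : L' →ₗ[R] L') (s : L) (s' : L') (ψ : L →ₗ[R] L') (q' : L')

theorem affine_map_biaffineBracket_sub (a b : L) :
    ψ (biaffineBracket B lam mu s a b) + q' - biaffineBracket B' lam' mu' s' (ψ a + q') (ψ b + q') =
      (B.compr₂ ψ - B'.compl₁₂ ψ ψ) a b + (ψ ∘ₗ lam - (B'.flip q' + lam') ∘ₗ ψ) a +
        (ψ ∘ₗ mu - (B' q' + mu') ∘ₗ ψ) b + (ψ s + q' - biaffineBracket B' lam' mu' s' q' q') := by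
  simp only [biaffineBracket, map_add, LinearMap.add_apply, LinearMap.sub_apply,
    LinearMap.compr₂_apply, LinearMap.compl₁₂_apply, LinearMap.comp_apply, LinearMap.flip_apply]
  abel

theorem affine_map_biaffineBracket_hom_iff :
    (∀ a b, ψ (biaffineBracket B lam mu s a b) + q' =
        biaffineBracket B' lam' mu' s' (ψ a + q') (ψ b + q')) ↔
      (∀ a b, ψ (B a b) = B' (ψ a) (ψ b)) ∧
        ψ s = s' + lam' q' + mu' q' + B' q' q' - q' ∧
        (∀ a, ψ (mu a) = B' q' (ψ a) + mu' (ψ a)) ∧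
        (∀ a, ψ (lam a) = B' (ψ a) q' + lam' (ψ a)) := by
  have hconst : ψ s + q' = biaffineBracket B' lam' mu' s' q' q' ↔
      ψ s = s' + lam' q' + mu' q' + B' q' q' - q' := by
    rw [eq_sub_iff_add_eq, biaffineBracket]
    constructor <;> intro h <;> rw [h] <;> abel
  simp_rw [← sub_eq_zero (a := ψ (biaffineBracket B lam mu s _ _) + q'),
    affine_map_biaffineBracket_sub, LinearMap.biaffine_eq_zero_iff, sub_eq_zero, hconst,
    LinearMap.ext_iff, LinearMap.comp_apply, LinearMap.compr₂_apply, LinearMap.compl₁₂_apply,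
    LinearMap.add_apply, LinearMap.flip_apply]
  tauto

end BiaffineBracket

theorem leibniz_affgebra_morphism_characterization_general
    {F L L' : Type*} [Field F] [AddCommGroup L] [Module F L]
    [AddCommGroup L'] [Module F L']
    (B : L →ₗ[F] L →ₗ[F] L) (B' : L' →ₗ[F] L' →ₗ[F] L')
    (lam mu : L →ₗ[F] L) (lam' mu' : L' →ₗ[F] L') (s : L) (s' : L')
    (br : L → L → L) (hbr : ∀ a b, br a b = B a b + lam a + mu b + s)
    (br' : L' → L' → L') (hbr' : ∀ a b, br' a b = B' a b + lam' a + mu' b + s') :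
    (∃ (ψ : L →ₗ[F] L') (q' : L'),
        ∀ a b : L, ψ (br a b) + q' = br' (ψ a + q') (ψ b + q')) ↔
    (∃ (ψ : L →ₗ[F] L') (q' : L'),
        (∀ a b : L, ψ (B a b) = B' (ψ a) (ψ b)) ∧
        ψ s = s' + lam' q' + mu' q' + B' q' q' - q' ∧
        (∀ a : L, ψ (mu a) = B' q' (ψ a) + mu' (ψ a)) ∧
        (∀ a : L, ψ (lam a) = B' (ψ a) q' + lam' (ψ a))) := by
  obtain rfl : br = biaffineBracket B lam mu s := funext₂ hbr
  obtain rfl : br' = biaffineBracket B' lam' mu' s' := funext₂ hbr'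
  exact exists₂_congr fun ψ q' => affine_map_biaffineBracket_hom_iff B B' lam mu lam' mu' s s' ψ q'

/-- Characterization of morphisms between Leibniz affgebras `a(L;lam,mu,s)` and
`a(L';lam',mu',s')`: there exists an affine map `φ(x) = ψ(x) + q'` preserving the
bi-affine brackets if and only if there exist a Leibniz algebra morphism `ψ` and a
point `q'` satisfying the three compatibility conditions. -/
theorem leibniz_affgebra_morphism_characterization
    {F L L' : Type*} [Field F] [AddCommGroup L] [Module F L]
    [AddCommGroup L'] [Module F L']
    (B : L →ₗ[F] L →ₗ[F] L) (B' : L' →ₗ[F] L' →ₗ[F] L')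
    (leib : ∀ a b c : L, B (B a b) c = B (B a c) b + B a (B b c))
    (leib' : ∀ a b c : L', B' (B' a b) c = B' (B' a c) b + B' a (B' b c))
    (lam mu : L →ₗ[F] L) (lam' mu' : L' →ₗ[F] L') (s : L) (s' : L')
    (br : L → L → L) (hbr : ∀ a b, br a b = B a b + lam a + mu b + s)
    (br' : L' → L' → L') (hbr' : ∀ a b, br' a b = B' a b + lam' a + mu' b + s') :
    (∃ (ψ : L →ₗ[F] L') (q' : L'),
        ∀ a b : L, ψ (br a b) + q' = br' (ψ a + q') (ψ b + q')) ↔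
    (∃ (ψ : L →ₗ[F] L') (q' : L'),
        (∀ a b : L, ψ (B a b) = B' (ψ a) (ψ b)) ∧
        ψ s = s' + lam' q' + mu' q' + B' q' q' - q' ∧
        (∀ a : L, ψ (mu a) = B' q' (ψ a) + mu' (ψ a)) ∧
        (∀ a : L, ψ (lam a) = B' (ψ a) q' + lam' (ψ a))) :=
  leibniz_affgebra_morphism_characterization_general B B' lam mu lam' mu' s s' br hbr br' hbr'
end

section
/- Let (L, [−,−]) and (L', [−,−]') be Leibniz algebras over a field F, λ, μ : L → L and λ', μ' : L' → L' linear maps, s ∈ L, s' ∈ L', with bi-affine brackets {a,b} = [a,b] + λ(a) + μ(b) + s and {x,y}' = [x,y]' + λ'(x) + μ'(y) + s'. Then there exists a bijective affine map φ : L → L' (φ(x) = ψ(x) + q' with ψ linear bijective) with φ({a,b}) = {φ(a), φ(b)}' for all a, b, if and only if there exist a bijective linear map ψ : L → L' with ψ([a,b]) = [ψ(a), ψ(b)]' for all a, b, and a point q ∈ L, such that: s' = ψ(s − λ(q) − μ(q) + [q,q] + q); μ'(ψ(x)) = ψ(μ(x) − [q,x]) for all x ∈ L; and λ'(ψ(x))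 = ψ(λ(x) − [x,q]) for all x ∈ L. -/
/-!
Evaluating an identity between bi-affine expressions at `(a, b)`, `(a, 0)`, `(0, b)` and `(0, 0)`
separates its bilinear, left linear, right linear and constant parts. Translating the arguments
of `{-,-}'` by `q' = ψ q` only changes its lower-order parts, by `[-, q']'`, `[q', -]'` and
`{q', q'}'`, so comparing parts of `ψ {a, b} + q' = {ψ a + q', ψ b + q'}'` gives exactly the
four conditions; surjectivity of `ψ` lets every `q'` be written as `ψ q`.
-/

section BiaffineCoefficients

variable {R M N : Type*} [CommSemiring R] [AddCommMonoid M] [Module R M]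

theorem biaffine_coefficients_eq_iff [AddCommGroup N] [Module R N]
    (B B' : M →ₗ[R] M →ₗ[R] N) (l l' m m' : M →ₗ[R] N) (c c' : N) :
    (∀ a b, B a b + l a + m b + c = B' a b + l' a + m' b + c') ↔
      (∀ a b, B a b = B' a b) ∧ (∀ a, l a = l' a) ∧ (∀ b, m b = m' b) ∧ c = c' := by
  refine ⟨fun h => ?_, fun ⟨hB, hl, hm, hc⟩ a b => by rw [hB, hl, hm, hc]⟩
  have hc : c = c' := by simpa using h 0 0
  have hl : ∀ a, l a = l' a := fun a => by simpa [hc] using h a 0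
  have hm : ∀ b, m b = m' b := fun b => by simpa [hc] using h 0 b
  exact ⟨fun a b => by simpa [hl, hm, hc] using h a b, hl, hm, hc⟩

theorem biaffine_add_add [AddCommMonoid N] [Module R N]
    (B : M →ₗ[R] M →ₗ[R] N) (l m : M →ₗ[R] N) (c : N) (q a b : M) :
    B (a + q) (b + q) + l (a + q) + m (b + q) + c =
      B a b + (l + B.flip q) a + (m + B q) b + (B q q + l q + m q + c) := by
  simp only [map_add, LinearMap.add_apply, LinearMap.flip_apply]
  abel

end BiaffineCoefficients

theorem affine_intertwines_biaffine_iff {R M N : Type*} [CommSemiring R]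
    [AddCommGroup M] [Module R M] [AddCommGroup N] [Module R N]
    (B : M →ₗ[R] M →ₗ[R] M) (B' : N →ₗ[R] N →ₗ[R] N) (lam mu : M →ₗ[R] M)
    (lam' mu' : N →ₗ[R] N) (s : M) (s' : N) (ψ : M →ₗ[R] N) (q : M) :
    (∀ a b, ψ (B a b + lam a + mu b + s) + ψ q =
        B' (ψ a + ψ q) (ψ b + ψ q) + lam' (ψ a + ψ q) + mu' (ψ b + ψ q) + s') ↔
      (∀ a b, ψ (B a b) = B' (ψ a) (ψ b)) ∧
        s' = ψ (s - lam q - mu q + B q q + q) ∧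
        (∀ x, mu' (ψ x) = ψ (mu x - B q x)) ∧
        (∀ x, lam' (ψ x) = ψ (lam x - B x q)) := by
  have hL : ∀ a b, ψ (B a b + lam a + mu b + s) + ψ q =
      B.compr₂ ψ a b + (ψ ∘ₗ lam) a + (ψ ∘ₗ mu) b + (ψ s + ψ q) := by
    simp [add_assoc]
  have hR : ∀ a b, B' (ψ a + ψ q) (ψ b + ψ q) + lam' (ψ a + ψ q) + mu' (ψ b + ψ q) + s' =
      B'.compl₁₂ ψ ψ a b + ((lam' + B'.flip (ψ q)) ∘ₗ ψ) a + ((mu' + B' (ψ q)) ∘ₗ ψ) b +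
        (B' (ψ q) (ψ q) + lam' (ψ q) + mu' (ψ q) + s') :=
    fun a b => biaffine_add_add B' lam' mu' s' (ψ q) (ψ a) (ψ b)
  simp only [hL, hR]
  rw [biaffine_coefficients_eq_iff]
  simp only [LinearMap.compr₂_apply, LinearMap.compl₁₂_apply, LinearMap.comp_apply,
    LinearMap.add_apply, LinearMap.flip_apply]
  refine and_congr_right fun hB => ?_
  simp only [← hB, map_add, map_sub]
  constructor
  · rintro ⟨hl, hm, hc⟩
    exact ⟨by linear_combination (norm := module) hl q + hm q - hc,
      fun x => by linear_combination (norm := module) -hm x,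
      fun x => by linear_combination (norm := module) -hl x⟩
  · rintro ⟨hc, hm, hl⟩
    exact ⟨fun x => by linear_combination (norm := module) -hl x,
      fun x => by linear_combination (norm := module) -hm x,
      by linear_combination (norm := module) -(hc + hl q + hm q)⟩

theorem leibniz_affgebra_isomorphism_characterization_general
    {F L L' : Type*} [Field F] [AddCommGroup L] [Module F L]
    [AddCommGroup L'] [Module F L']
    (B : L →ₗ[F] L →ₗ[F] L) (B' : L' →ₗ[F] L' →ₗ[F] L')
    (lam mu : L →ₗ[F] L) (lam' mu' : L' →ₗ[F] L') (s : L) (s' : L')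
    (br : L → L → L) (hbr : ∀ a b, br a b = B a b + lam a + mu b + s)
    (br' : L' → L' → L') (hbr' : ∀ a b, br' a b = B' a b + lam' a + mu' b + s') :
    (∃ (ψ : L →ₗ[F] L') (q' : L'), Function.Bijective ψ ∧
        ∀ a b : L, ψ (br a b) + q' = br' (ψ a + q') (ψ b + q')) ↔
    (∃ (ψ : L →ₗ[F] L') (q : L), Function.Bijective ψ ∧
        (∀ a b : L, ψ (B a b) = B' (ψ a) (ψ b)) ∧
        s' = ψ (s - lam q - mu q + B q q + q) ∧
        (∀ x : L, mu' (ψ x) = ψ (mu x - B q x)) ∧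
        (∀ x : L, lam' (ψ x) = ψ (lam x - B x q))) := by
  simp only [hbr, hbr', ← affine_intertwines_biaffine_iff]
  constructor
  · rintro ⟨ψ, q', hψ, h⟩
    obtain ⟨q, rfl⟩ := hψ.2 q'
    exact ⟨ψ, q, hψ, h⟩
  · rintro ⟨ψ, q, hψ, h⟩
    exact ⟨ψ, ψ q, hψ, h⟩

/-- Characterization of isomorphisms between Leibniz affgebras `a(L;lam,mu,s)` and
`a(L';lam',mu',s')`: there exists a bijective affine map `φ(x) = ψ(x) + q'` preserving
the bi-affine brackets if and only if there exist a Leibniz algebra isomorphism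
`ψ : L → L'` and a point `q ∈ L` satisfying the three compatibility conditions. -/
theorem leibniz_affgebra_isomorphism_characterization
    {F L L' : Type*} [Field F] [AddCommGroup L] [Module F L]
    [AddCommGroup L'] [Module F L']
    (B : L →ₗ[F] L →ₗ[F] L) (B' : L' →ₗ[F] L' →ₗ[F] L')
    (leib : ∀ a b c : L, B (B a b) c = B (B a c) b + B a (B b c))
    (leib' : ∀ a b c : L', B' (B' a b) c = B' (B' a c) b + B' a (B' b c))
    (lam mu : L →ₗ[F] L) (lam' mu' : L' →ₗ[F] L') (s : L) (s' : L')
    (br : L → L → L) (hbr : ∀ a b, br a b = B a b + lam a + mu b + s)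
    (br' : L' → L' → L') (hbr' : ∀ a b, br' a b = B' a b + lam' a + mu' b + s') :
    (∃ (ψ : L →ₗ[F] L') (q' : L'), Function.Bijective ψ ∧
        ∀ a b : L, ψ (br a b) + q' = br' (ψ a + q') (ψ b + q')) ↔
    (∃ (ψ : L →ₗ[F] L') (q : L), Function.Bijective ψ ∧
        (∀ a b : L, ψ (B a b) = B' (ψ a) (ψ b)) ∧
        s' = ψ (s - lam q - mu q + B q q + q) ∧
        (∀ x : L, mu' (ψ x) = ψ (mu x - B q x)) ∧
        (∀ x : L, lam' (ψ x) = ψ (lam x - B x q))) :=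
  leibniz_affgebra_isomorphism_characterization_general B B' lam mu lam' mu' s s' br hbr br' hbr'
end

section
/- Let (L, [−,−]) and (L', [−,−]') be Leibniz algebras over a field F, λ, μ : L → L and λ', μ' : L' → L' linear maps, s ∈ L, s' ∈ L', with bi-affine brackets {a,b} = [a,b] + λ(a) + μ(b) + s and {x,y}' = [x,y]' + λ'(x) + μ'(y) + s'. If there exists a bijective affine map φ : L → L' (φ(x) = ψ₀(x) + q' with ψ₀ linear bijective) satisfying φ({a,b}) = {φ(a), φ(b)}' for all a, b ∈ L, then L and L' are isomorphic as Leibniz algebras, i.e. there is a bijective linear map ψ : L → L' with ψ([a,b]) = [ψ(a), ψ(b)]' for all a, b. In particular, Leibniz affgebras whose fibres are non-isomorphic Leibniz algebras are non-isomorphic. -/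
/-! The fibre bracket is the second difference of the bi-affine bracket,
`B a b = {a, b} - {a, 0} - {0, b} + {0, 0}`, and the same holds after moving the base point
`0` to any `p`. An affine isomorphism `φ = ψ₀ + q'` preserving the brackets carries the second
difference at `0` to the second difference at `q' = φ 0`, so its linear part `ψ₀` preserves
the fibre brackets. -/

theorem biaffine_second_difference {R M N P : Type*} [CommSemiring R]
    [AddCommMonoid M] [Module R M] [AddCommMonoid N] [Module R N] [AddCommGroup P] [Module R P]
    (B : M →ₗ[R] N →ₗ[R] P) (lam : M →ₗ[R] P) (mu : N →ₗ[R] P) (s : P)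
    (br : M → N → P) (hbr : ∀ a b, br a b = B a b + lam a + mu b + s) (p a : M) (q b : N) :
    br (a + p) (b + q) - br (a + p) q - br p (b + q) + br p q = B a b := by
  simp only [hbr, map_add, LinearMap.add_apply]
  abel

theorem leibniz_affgebra_iso_implies_fibre_iso_general
    {F L L' : Type*} [Field F] [AddCommGroup L] [Module F L]
    [AddCommGroup L'] [Module F L']
    (B : L →ₗ[F] L →ₗ[F] L) (B' : L' →ₗ[F] L' →ₗ[F] L')
    (lam mu : L →ₗ[F] L) (lam' mu' : L' →ₗ[F] L') (s : L) (s' : L')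
    (br : L → L → L) (hbr : ∀ a b, br a b = B a b + lam a + mu b + s)
    (br' : L' → L' → L') (hbr' : ∀ a b, br' a b = B' a b + lam' a + mu' b + s')
    (ψ₀ : L →ₗ[F] L') (q' : L') (hψ₀ : Function.Bijective ψ₀)
    (hmor : ∀ a b : L, ψ₀ (br a b) + q' = br' (ψ₀ a + q') (ψ₀ b + q')) :
    ∃ ψ : L →ₗ[F] L', Function.Bijective ψ ∧
      ∀ a b : L, ψ (B a b) = B' (ψ a) (ψ b) := by
  refine ⟨ψ₀, hψ₀, fun a b => ?_⟩
  have hψ₀br : ∀ x y, ψ₀ (br x y) = br' (ψ₀ x + q') (ψ₀ y + q') - q' :=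
    fun x y => eq_sub_of_add_eq (hmor x y)
  rw [← biaffine_second_difference B lam mu s br hbr 0 a 0 b,
    ← biaffine_second_difference B' lam' mu' s' br' hbr' q' (ψ₀ a) q' (ψ₀ b)]
  simp only [add_zero, map_add, map_sub, hψ₀br, map_zero, zero_add]
  abel

/-- If two Leibniz affgebras `a(L;lam,mu,s)` and `a(L';lam',mu',s')` are isomorphic
(via a bijective affine map preserving the bi-affine brackets), then their fibre
Leibniz algebras `(L, B)` and `(L', B')` are isomorphic as Leibniz algebras. -/
theorem leibniz_affgebra_iso_implies_fibre_iso
    {F L L' : Type*} [Field F] [AddCommGroup L] [Module F L]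
    [AddCommGroup L'] [Module F L']
    (B : L →ₗ[F] L →ₗ[F] L) (B' : L' →ₗ[F] L' →ₗ[F] L')
    (leib : ∀ a b c : L, B (B a b) c = B (B a c) b + B a (B b c))
    (leib' : ∀ a b c : L', B' (B' a b) c = B' (B' a c) b + B' a (B' b c))
    (lam mu : L →ₗ[F] L) (lam' mu' : L' →ₗ[F] L') (s : L) (s' : L')
    (br : L → L → L) (hbr : ∀ a b, br a b = B a b + lam a + mu b + s)
    (br' : L' → L' → L') (hbr' : ∀ a b, br' a b = B' a b + lam' a + mu' b + s')
    (ψ₀ : L →ₗ[F] L') (q' : L') (hψ₀ : Function.Bijective ψ₀)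
    (hmor : ∀ a b : L, ψ₀ (br a b) + q' = br' (ψ₀ a + q') (ψ₀ b + q')) :
    ∃ ψ : L →ₗ[F] L', Function.Bijective ψ ∧
      ∀ a b : L, ψ (B a b) = B' (ψ a) (ψ b) :=
  leibniz_affgebra_iso_implies_fibre_iso_general B B' lam mu lam' mu' s s' br hbr br' hbr' ψ₀ q' hψ₀
    hmor
end

section
/- Let (L, [−,−]) be a Leibniz algebra over a field F, λ, μ : L → L linear maps and s ∈ L, with bi-affine bracket {x,y} = [x,y] + λ(x) + μ(y) + s. Let H ⊆ L be a linear subspace and a ∈ L, and consider the affine subspace B = a + H. Then {x,y} ∈ B for all x, y ∈ B if and only if H is closed under [−,−] (i.e. [u,v] ∈ H for all u, v ∈ H) and the following three conditions hold: (1) [a,a] − a + λ(a) + μ(a) + s ∈ H; (2) λ(u) + [u,a] ∈ H for all u ∈ H; (3) μ(u) + [a,u] ∈ H for all u ∈ H. -/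
/-!
Write points of `a + H` as `a + u` with `u ∈ H`. Bilinearity expands
`{a + u, a + v} - a` as a constant, a part linear in `u`, a part linear in `v` and `[u, v]`,
and these four terms are exactly those of conditions (1), (2), (3) and of the closure of `H`.
Specialising `u` and `v` to `0` separates them, so the sum lies in `H` for all `u, v ∈ H`
exactly when each term does.
-/

theorem Submodule.forall_add_add_add_mem_iff {R M : Type*} [Ring R] [AddCommGroup M]
    [Module R M] (H : Submodule R M) (c : M) (f g : M → M) (q : M → M → M)
    (hf : f 0 = 0) (hg : g 0 = 0) (hq_left : ∀ v, q 0 v = 0) (hq_right : ∀ u, q u 0 = 0) :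
    (∀ u ∈ H, ∀ v ∈ H, c + f u + g v + q u v ∈ H) ↔
      (∀ u ∈ H, ∀ v ∈ H, q u v ∈ H) ∧ c ∈ H ∧ (∀ u ∈ H, f u ∈ H) ∧ ∀ v ∈ H, g v ∈ H := by
  constructor
  · intro h
    have hc : c ∈ H := by simpa [hf, hg, hq_left] using h 0 H.zero_mem 0 H.zero_mem
    have hf' : ∀ u ∈ H, f u ∈ H := fun u hu => by
      simpa [hg, hq_right] using H.sub_mem (h u hu 0 H.zero_mem) hc
    have hg' : ∀ v ∈ H, g v ∈ H := fun v hv => by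
      simpa [hf, hq_left] using H.sub_mem (h 0 H.zero_mem v hv) hc
    refine ⟨fun u hu v hv => ?_, hc, hf', hg'⟩
    have hsum := H.sub_mem (H.sub_mem (H.sub_mem (h u hu v hv) hc) (hf' u hu)) (hg' v hv)
    rwa [show c + f u + g v + q u v - c - f u - g v = q u v by abel] at hsum
  · rintro ⟨hq, hc, hf, hg⟩ u hu v hv
    exact H.add_mem (H.add_mem (H.add_mem hc (hf u hu)) (hg v hv)) (hq u hu v hv)

theorem Submodule.forall_sub_mem_iff_forall_add {R M : Type*} [Ring R] [AddCommGroup M]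
    [Module R M] (H : Submodule R M) (a : M) (P : M → M → Prop) :
    (∀ x y, x - a ∈ H → y - a ∈ H → P x y) ↔ ∀ u ∈ H, ∀ v ∈ H, P (a + u) (a + v) :=
  ⟨fun h u hu v hv => h _ _ (by simpa) (by simpa),
    fun h x y hx hy => by simpa using h _ hx _ hy⟩

theorem LinearMap.bracket_add_add_sub {R L : Type*} [CommRing R] [AddCommGroup L] [Module R L]
    (B : L →ₗ[R] L →ₗ[R] L) (lam mu : L →ₗ[R] L) (s a u v : L) :
    B (a + u) (a + v) + lam (a + u) + mu (a + v) + s - a =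
      (B a a - a + lam a + mu a + s) + (lam u + B u a) + (mu v + B a v) + B u v := by
  simp only [map_add, LinearMap.add_apply]
  abel

theorem leibniz_subaffgebra_characterization_general
    {F L : Type*} [Field F] [AddCommGroup L] [Module F L]
    (B : L →ₗ[F] L →ₗ[F] L)
    (lam mu : L →ₗ[F] L) (s : L)
    (br : L → L → L) (hbr : ∀ x y, br x y = B x y + lam x + mu y + s)
    (H : Submodule F L) (a : L) :
    (∀ x y : L, x - a ∈ H → y - a ∈ H → br x y - a ∈ H) ↔
      ((∀ u ∈ H, ∀ v ∈ H, B u v ∈ H) ∧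
       B a a - a + lam a + mu a + s ∈ H ∧
       (∀ u ∈ H, lam u + B u a ∈ H) ∧
       (∀ u ∈ H, mu u + B a u ∈ H)) := by
  rw [H.forall_sub_mem_iff_forall_add a (fun x y => br x y - a ∈ H)]
  simp only [hbr, B.bracket_add_add_sub]
  exact H.forall_add_add_add_mem_iff _ (fun u => lam u + B u a) (fun v => mu v + B a v)
    (fun u v => B u v) (by simp) (by simp) (by simp) (by simp)

/-- Characterization of Leibniz subaffgebras: for a Leibniz algebra `(L, B)` with
bi-affine bracket `{x,y} = B x y + lam x + mu y + s`, the affine subspace `a + H`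
(for a linear subspace `H` and `a ∈ L`) is closed under `{−,−}` if and only if `H`
is closed under `B` and the three conditions (1)–(3) hold. -/
theorem leibniz_subaffgebra_characterization
    {F L : Type*} [Field F] [AddCommGroup L] [Module F L]
    (B : L →ₗ[F] L →ₗ[F] L)
    (leib : ∀ a b c : L, B (B a b) c = B (B a c) b + B a (B b c))
    (lam mu : L →ₗ[F] L) (s : L)
    (br : L → L → L) (hbr : ∀ x y, br x y = B x y + lam x + mu y + s)
    (H : Submodule F L) (a : L) :
    (∀ x y : L, x - a ∈ H → y - a ∈ H → br x y - a ∈ H) ↔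
      ((∀ u ∈ H, ∀ v ∈ H, B u v ∈ H) ∧
       B a a - a + lam a + mu a + s ∈ H ∧
       (∀ u ∈ H, lam u + B u a ∈ H) ∧
       (∀ u ∈ H, mu u + B a u ∈ H)) :=
  leibniz_subaffgebra_characterization_general B lam mu s br hbr H a
end

section
/- Let V be a vector space over a field F and let {a,b} = [a,b] + λ(a) + μ(b) + s be a bi-affine bracket on V satisfying the derivative identity {{a,b},c} = {{a,c},b} − {a,b} + {a,{b,c}} for all a, b, c ∈ V. Define v(a,b) := {a,b} − a. Then v satisfies the vector-valued Leibniz rule: for all a, b, c ∈ V, v(v(a,b), c) − v(0,c) = (v(v(a,c), b) − v(0,b)) + (v(a, v(b,c)) − v(a,0)). -/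
/-!
Only affineness of the bracket in each argument matters: expanding `v = br - id` with it, the
terms `a`, `{a,b}` and `{a,c}` on the two sides cancel and the vector-valued Leibniz rule reduces
to the derivative identity itself.
-/

section Biaffine

variable {R V : Type*} [CommSemiring R] [AddCommGroup V] [Module R V]
  {B : V →ₗ[R] V →ₗ[R] V} {lam mu : V →ₗ[R] V} {s : V} {br : V → V → V}

theorem biaffine_sub_left (hbr : ∀ a b, br a b = B a b + lam a + mu b + s) (x y c : V) :
    br (x - y) c = br x c - br y c + br 0 c := by
  simp only [hbr, map_sub, map_zero, LinearMap.sub_apply, LinearMap.zero_apply]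
  abel

theorem biaffine_sub_right (hbr : ∀ a b, br a b = B a b + lam a + mu b + s) (a x y : V) :
    br a (x - y) = br a x - br a y + br a 0 := by
  simp only [hbr, map_sub, map_zero]
  abel

end Biaffine

theorem vectorLeibniz_of_derivative_identity {V : Type*} [AddCommGroup V] {br v : V → V → V}
    (hleft : ∀ x y c, br (x - y) c = br x c - br y c + br 0 c)
    (hright : ∀ a x y, br a (x - y) = br a x - br a y + br a 0)
    (der : ∀ a b c, br (br a b) c = br (br a c) b - br a b + br a (br b c))
    (hv : ∀ a b, v a b = br a b - a) (a b c : V) :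
    v (v a b) c - v 0 c = (v (v a c) b - v 0 b) + (v a (v b c) - v a 0) := by
  simp only [hv, sub_zero, hleft, hright, der a b c]
  abel

/-- If the bi-affine bracket `{a,b} = B a b + lam a + mu b + s` on a vector space `V`
satisfies the derivative identity `{{a,b},c} = {{a,c},b} − {a,b} + {a,{b,c}}`, then
`v(a,b) := {a,b} − a` satisfies the vector-valued Leibniz rule. -/
theorem derivative_bracket_gives_vector_valued_leibniz
    {F V : Type*} [Field F] [AddCommGroup V] [Module F V]
    (B : V →ₗ[F] V →ₗ[F] V) (lam mu : V →ₗ[F] V) (s : V)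
    (br : V → V → V) (hbr : ∀ a b, br a b = B a b + lam a + mu b + s)
    (der : ∀ a b c : V, br (br a b) c = br (br a c) b - br a b + br a (br b c))
    (v : V → V → V) (hv : ∀ a b, v a b = br a b - a) :
    ∀ a b c : V,
      v (v a b) c - v 0 c = (v (v a c) b - v 0 b) + (v a (v b c) - v a 0) :=
  vectorLeibniz_of_derivative_identity (biaffine_sub_left hbr) (biaffine_sub_right hbr) der hv
end

section
/- Let V be a vector space over a field F and let v(a,b) = C(a,b) + ρ(a) + σ(b) + t be a bi-affine map on V (C bilinear, ρ, σ linear, t ∈ V) satisfying the vector-valued Leibniz rule: for all a, b, c ∈ V, v(v(a,b), c) − v(0,c) = (v(v(a,c), b) − v(0,b)) + (v(a, v(b,c)) − v(a,0)). Define {a,b} := v(a,b) + a. Then {−,−} satisfies the derivative identity {{a,b},c} = {{a,c},b} − {a,b} + {a,{b,c}} for all a, b, c ∈ V, i.e. it is a derivative affine Leibniz bracket. -/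
/-! Since `v` is affine in each argument, `v (x + y) c = v x c + v y c - v 0 c` and likewise on
the right. Expanding `{{a,b},c}`, `{{a,c},b}` and `{a,{b,c}}` with these rules, the summands
`v a b`, `v a c` and `a` cancel, and the derivative identity becomes exactly the Leibniz rule. -/

section BiAffine

variable {R V : Type*} [CommSemiring R] [AddCommGroup V] [Module R V]
  {C : V →ₗ[R] V →ₗ[R] V} {ρ σ : V →ₗ[R] V} {t : V} {v : V → V → V}

theorem biAffine_add_left (hv : ∀ a b, v a b = C a b + ρ a + σ b + t) (x y c : V) :
    v (x + y) c = v x c + v y c - v 0 c := by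
  simp only [hv, map_add, map_zero, LinearMap.add_apply, LinearMap.zero_apply]
  abel

theorem biAffine_add_right (hv : ∀ a b, v a b = C a b + ρ a + σ b + t) (a x y : V) :
    v a (x + y) = v a x + v a y - v a 0 := by
  simp only [hv, map_add, map_zero]
  abel

end BiAffine

theorem derivative_identity_iff_leibniz {V : Type*} [AddCommGroup V] {v br : V → V → V}
    (hl : ∀ x y c, v (x + y) c = v x c + v y c - v 0 c)
    (hr : ∀ a x y, v a (x + y) = v a x + v a y - v a 0)
    (hbr : ∀ a b, br a b = v a b + a) (a b c : V) :
    br (br a b) c = br (br a c) b - br a b + br a (br b c) ↔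
      v (v a b) c - v 0 c = (v (v a c) b - v 0 b) + (v a (v b c) - v a 0) := by
  have hdiff : br (br a b) c - (br (br a c) b - br a b + br a (br b c)) =
      (v (v a b) c - v 0 c) - ((v (v a c) b - v 0 b) + (v a (v b c) - v a 0)) := by
    simp only [hbr, hl, hr]
    abel
  rw [← sub_eq_zero, hdiff, sub_eq_zero]

/-- If the bi-affine map `v(a,b) = C a b + ρ a + σ b + t` on a vector space `V`
satisfies the vector-valued Leibniz rule, then `{a,b} := v(a,b) + a` satisfies the
derivative identity `{{a,b},c} = {{a,c},b} − {a,b} + {a,{b,c}}`, i.e., it is a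
derivative affine Leibniz bracket. -/
theorem vector_valued_leibniz_gives_derivative_bracket
    {F V : Type*} [Field F] [AddCommGroup V] [Module F V]
    (C : V →ₗ[F] V →ₗ[F] V) (ρ σ : V →ₗ[F] V) (t : V)
    (v : V → V → V) (hv : ∀ a b, v a b = C a b + ρ a + σ b + t)
    (hleib : ∀ a b c : V,
      v (v a b) c - v 0 c = (v (v a c) b - v 0 b) + (v a (v b c) - v a 0))
    (br : V → V → V) (hbr : ∀ a b, br a b = v a b + a) :
    ∀ a b c : V, br (br a b) c = br (br a c) b - br a b + br a (br b c) := fun a b c =>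
  (derivative_identity_iff_leibniz (biAffine_add_left hv) (biAffine_add_right hv) hbr a b c).2
    (hleib a b c)
end

section
/- Let A be an associative (not necessarily unital) algebra over a field F, let d : A → A be a linear map, t ∈ A, and set D(x) := d(x) + t. Assume that D(D(a)·b) = D(a)·D(b) = D(a·D(b)) for all a, b ∈ A. Then the bi-affine bracket {a,b} := a·D(b) − D(b)·a + a satisfies the derivative identity {{a,b},c} = {{a,c},b} − {a,b} + {a,{b,c}} for all a, b, c ∈ A; that is, A with this bracket is a derivative Leibniz affgebra. -/
/-! The two hypotheses on `D`, together with its affineness, give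
`D {b,c} = D b * D c - D c * D b + D b`. The map `D` enters the derivative identity only
through `D b`, `D c` and `D {b,c}`, so after this substitution the identity is a polynomial
identity in the noncommuting variables `a, b, c, D b, D c`. -/

theorem map_sub_add_of_eq_add_const {M A B : Type*} [AddCommGroup A] [AddCommGroup B]
    [FunLike M A B] [AddMonoidHomClass M A B] (d : M) (t : B) {D : A → B}
    (hD : ∀ x, D x = d x + t) (x y z : A) :
    D (x - y + z) = D x - D y + D z := by
  simp only [hD, map_add, map_sub]
  abel

section AffBracket

variable {A : Type*} [NonUnitalRing A]

def affBracket (D : A → A) (a b : A) : A := a * D b - D b * a + a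

theorem affBracket_derivative_of_map_affBracket {D : A → A}
    (hD : ∀ b c, D (affBracket D b c) = D b * D c - D c * D b + D b) (a b c : A) :
    affBracket D (affBracket D a b) c =
      affBracket D (affBracket D a c) b - affBracket D a b +
        affBracket D a (affBracket D b c) := by
  simp only [affBracket] at hD ⊢
  rw [hD]
  noncomm_ring

theorem map_affBracket_of_eq_add_const {M : Type*} [FunLike M A A] [AddMonoidHomClass M A A]
    (d : M) (t : A) {D : A → A} (hD : ∀ x, D x = d x + t)
    (h1 : ∀ a b : A, D (D a * b) = D a * D b) (h2 : ∀ a b : A, D a * D b = D (a * D b))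
    (b c : A) :
    D (affBracket D b c) = D b * D c - D c * D b + D b := by
  rw [affBracket, map_sub_add_of_eq_add_const d t hD, ← h2, h1]

end AffBracket

theorem associative_affgebra_derivative_leibniz_general
    {F A : Type*} [Field F] [NonUnitalRing A] [Module F A]
    (d : A →ₗ[F] A) (t : A) (D : A → A) (hD : ∀ x, D x = d x + t)
    (h1 : ∀ a b : A, D (D a * b) = D a * D b)
    (h2 : ∀ a b : A, D a * D b = D (a * D b))
    (br : A → A → A) (hbr : ∀ a b, br a b = a * D b - D b * a + a) :
    ∀ a b c : A, br (br a b) c = br (br a c) b - br a b + br a (br b c) := by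
  obtain rfl : br = affBracket D := funext₂ hbr
  exact affBracket_derivative_of_map_affBracket (map_affBracket_of_eq_add_const d t hD h1 h2)

/-- Let `A` be an associative (not necessarily unital) algebra over a field `F`,
`D(x) = d(x) + t` an affine map with `D(D(a)·b) = D(a)·D(b) = D(a·D(b))`. Then the
bi-affine bracket `{a,b} := a·D(b) − D(b)·a + a` satisfies the derivative identity
`{{a,b},c} = {{a,c},b} − {a,b} + {a,{b,c}}` (a derivative Leibniz affgebra). -/
theorem associative_affgebra_derivative_leibniz
    {F A : Type*} [Field F] [NonUnitalRing A] [Module F A]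
    [SMulCommClass F A A] [IsScalarTower F A A]
    (d : A →ₗ[F] A) (t : A) (D : A → A) (hD : ∀ x, D x = d x + t)
    (h1 : ∀ a b : A, D (D a * b) = D a * D b)
    (h2 : ∀ a b : A, D a * D b = D (a * D b))
    (br : A → A → A) (hbr : ∀ a b, br a b = a * D b - D b * a + a) :
    ∀ a b c : A, br (br a b) c = br (br a c) b - br a b + br a (br b c) :=
  associative_affgebra_derivative_leibniz_general d t D hD h1 h2 br hbr
end

section
/- Let g be a Lie algebra over a field F, λ, μ : g → g linear maps and s ∈ g satisfying, for all a, b ∈ g: (1) ⁅λ(a),b⁆ − ⁅a,μ(b)⁆ = λ(⁅a,b⁆); (2) ⁅μ(a),b⁆ − ⁅μ(b),a⁆ = μ(⁅a,b⁆); (3) ⁅s,a⁆ + μ(a) = μ(μ(a)) + λ(μ(a)). Then: (i) μ is a derivation of g, i.e. μ(⁅a,b⁆) = ⁅μ(a),b⁆ + ⁅a,μ(b)⁆ for all a, b; and (ii) κ := λ + μ lies in the centroid of g, i.e. κ(⁅a,b⁆) = ⁅κ(a),b⁆ for all a, b. -/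
theorem map_lie_eq_lie_add_lie_of_lie_sub_lie_swap {L : Type*} [LieRing L] (f : L → L)
    (hf : ∀ a b : L, ⁅f a, b⁆ - ⁅f b, a⁆ = f ⁅a, b⁆) (a b : L) :
    f ⁅a, b⁆ = ⁅f a, b⁆ + ⁅a, f b⁆ := by
  rw [← hf, ← lie_skew (f b) a, sub_neg_eq_add]

theorem add_map_lie_eq_lie_of_map_lie_eq_lie_add_lie {L : Type*} [LieRing L] (f d : L → L)
    (hf : ∀ a b : L, ⁅f a, b⁆ - ⁅a, d b⁆ = f ⁅a, b⁆)
    (hd : ∀ a b : L, d ⁅a, b⁆ = ⁅d a, b⁆ + ⁅a, d b⁆) (a b : L) :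
    f ⁅a, b⁆ + d ⁅a, b⁆ = ⁅f a + d a, b⁆ := by
  rw [hd, ← hf, add_lie]
  abel

theorem homogeneous_lie_fibre_mu_derivation_kappa_centroid_general
    {F g : Type*} [Field F] [LieRing g] [LieAlgebra F g]
    (lam mu : g →ₗ[F] g)
    (h1 : ∀ a b : g, ⁅lam a, b⁆ - ⁅a, mu b⁆ = lam ⁅a, b⁆)
    (h2 : ∀ a b : g, ⁅mu a, b⁆ - ⁅mu b, a⁆ = mu ⁅a, b⁆) :
    (∀ a b : g, mu ⁅a, b⁆ = ⁅mu a, b⁆ + ⁅a, mu b⁆) ∧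
    (∀ a b : g, (lam + mu) ⁅a, b⁆ = ⁅(lam + mu) a, b⁆) := by
  have hmu := map_lie_eq_lie_add_lie_of_lie_sub_lie_swap mu h2
  exact ⟨hmu, add_map_lie_eq_lie_of_map_lie_eq_lie_add_lie lam mu h1 hmu⟩

/-- For a Lie algebra `g` over a field `F` and data `(lam, mu, s)` satisfying the
homogeneous Leibniz affgebra conditions (1)–(3), the map `mu` is a derivation of `g`
and `κ := lam + mu` lies in the centroid of `g`. -/
theorem homogeneous_lie_fibre_mu_derivation_kappa_centroid
    {F g : Type*} [Field F] [LieRing g] [LieAlgebra F g]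
    (lam mu : g →ₗ[F] g) (s : g)
    (h1 : ∀ a b : g, ⁅lam a, b⁆ - ⁅a, mu b⁆ = lam ⁅a, b⁆)
    (h2 : ∀ a b : g, ⁅mu a, b⁆ - ⁅mu b, a⁆ = mu ⁅a, b⁆)
    (h3 : ∀ a : g, ⁅s, a⁆ + mu a = mu (mu a) + lam (mu a)) :
    (∀ a b : g, mu ⁅a, b⁆ = ⁅mu a, b⁆ + ⁅a, mu b⁆) ∧
    (∀ a b : g, (lam + mu) ⁅a, b⁆ = ⁅(lam + mu) a, b⁆) :=
  homogeneous_lie_fibre_mu_derivation_kappa_centroid_general lam mu h1 h2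
end

section
/- Let g be a Lie algebra over a field F in which any two commuting elements are linearly dependent (i.e. whenever ⁅a,b⁆ = 0 for a, b ∈ g, the vectors a and b are linearly dependent; equivalently g has no non-trivial abelian subalgebras). Let λ, μ : g → g be linear maps and s ∈ g satisfying, for all a, b ∈ g: (1) ⁅λ(a),b⁆ − ⁅a,μ(b)⁆ = λ(⁅a,b⁆); (2) ⁅μ(a),b⁆ − ⁅μ(b),a⁆ = μ(⁅a,b⁆); (3) ⁅s,a⁆ + μ(a) = μ(μ(a)) + λ(μ(a)). Then there exists α ∈ F such that λ(a) + μ(a) = α·a for all a ∈ g; hence the homogeneous Leibniz affgebra a(g;λ,μ,s) equals a(g; α·id − μ, μ, s). -/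
/-! Putting `a = b` in condition (1) shows that every `a` commutes with `(λ + μ) a`, so by the
hypothesis on `g` each vector is an eigenvector of `λ + μ`; an endomorphism of a vector space with
this property is a scalar multiple of the identity. -/

theorem lie_self_add_apply_eq_zero {R L : Type*} [CommRing R] [LieRing L] [LieAlgebra R L]
    (lam mu : L →ₗ[R] L) (h : ∀ a b : L, ⁅lam a, b⁆ - ⁅a, mu b⁆ = lam ⁅a, b⁆) (a : L) :
    ⁅a, (lam + mu) a⁆ = 0 := by
  have h_aa : ⁅lam a, a⁆ = ⁅a, mu a⁆ := by
    simpa only [lie_self, map_zero, sub_eq_zero] using h a a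
  rw [LinearMap.add_apply, lie_add, ← lie_skew, h_aa, neg_add_cancel]

theorem homogeneous_leibniz_affgebra_no_abelian_subalgebras_general
    {F g : Type*} [Field F] [LieRing g] [LieAlgebra F g]
    (hdep : ∀ a b : g, ⁅a, b⁆ = 0 → ¬ LinearIndependent F ![a, b])
    (lam mu : g →ₗ[F] g)
    (h1 : ∀ a b : g, ⁅lam a, b⁆ - ⁅a, mu b⁆ = lam ⁅a, b⁆) :
    ∃ α : F, ∀ a : g, lam a + mu a = α • a := by
  obtain ⟨α, hα⟩ := LinearMap.exists_eq_smul_id_of_forall_notLinearIndependent (f := lam + mu)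
    fun a => hdep a _ (lie_self_add_apply_eq_zero lam mu h1 a)
  exact ⟨α, fun a => by simpa using LinearMap.congr_fun hα a⟩

/-- Let `g` be a Lie algebra over a field `F` in which any two commuting elements are
linearly dependent (no non-trivial abelian subalgebras). If `(lam, mu, s)` satisfies
the homogeneous Leibniz affgebra conditions (1)–(3), then there exists `α ∈ F` with
`lam + mu = α·id`; hence `a(g;lam,mu,s) = a(g;α·id − mu, mu, s)`. -/
theorem homogeneous_leibniz_affgebra_no_abelian_subalgebras
    {F g : Type*} [Field F] [LieRing g] [LieAlgebra F g]
    (hdep : ∀ a b : g, ⁅a, b⁆ = 0 → ¬ LinearIndependent F ![a, b])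
    (lam mu : g →ₗ[F] g) (s : g)
    (h1 : ∀ a b : g, ⁅lam a, b⁆ - ⁅a, mu b⁆ = lam ⁅a, b⁆)
    (h2 : ∀ a b : g, ⁅mu a, b⁆ - ⁅mu b, a⁆ = mu ⁅a, b⁆)
    (h3 : ∀ a : g, ⁅s, a⁆ + mu a = mu (mu a) + lam (mu a)) :
    ∃ α : F, ∀ a : g, lam a + mu a = α • a :=
  homogeneous_leibniz_affgebra_no_abelian_subalgebras_general hdep lam mu h1
end

section
/- Let V be a vector space over a field F and {−,−} a bi-affine bracket on V ({a,b} = [a,b] + λ(a) + μ(b) + s with [−,−] bilinear, λ, μ linear, s ∈ V) which is an affine Leibniz bracket (the linearization at 0 of its Leibnizian Λ(a,b,c) = {a,{b,c}} − {{a,b},c} + {{a,c},b} vanishes) and satisfies the affine antisymmetry {a,b} − {a,a} + {b,a} = {b,b} for all a, b ∈ V. Then the affine Jacobi identity {{a,b},c} − {{a,a},a} + {{b,c},a} − {{b,b},b} + {{c,a},b} = {{c,c},c} holds for all a, b, c ∈ V if and only if the Leibnizian is of Lie type, i.e. Λ(a,b,c) = {a,a} − {{c,c},c} + {{b,c},{b,c}}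 − {{a,a},a} + {{c,c},b} − {{b,b},b} + {{a,a},b} for all a, b, c ∈ V. -/
/-- Let `{a,b} = B a b + lam a + mu b + s` be a bi-affine bracket on a vector space `V`
which is an affine Leibniz bracket (the linearization at `0` of its Leibnizian
`Λ(a,b,c) = {a,{b,c}} − {{a,b},c} + {{a,c},b}` vanishes) and which satisfies the affine
antisymmetry `{a,b} − {a,a} + {b,a} = {b,b}`. Then the affine Jacobi identity holds if
and only if the Leibnizian is of Lie type. -/
theorem lie_affgebra_iff_lie_type_leibniz_affgebra
    {F V : Type*} [Field F] [AddCommGroup V] [Module F V]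
    (B : V →ₗ[F] V →ₗ[F] V) (lam mu : V →ₗ[F] V) (s : V)
    (br : V → V → V) (hbr : ∀ a b, br a b = B a b + lam a + mu b + s)
    (Λ : V → V → V → V)
    (hΛ : ∀ a b c, Λ a b c = br a (br b c) - br (br a b) c + br (br a c) b)
    (haffleib : ∀ a b c : V,
      Λ a b c - Λ a b 0 - Λ a 0 c - Λ 0 b c
        + Λ a 0 0 + Λ 0 b 0 + Λ 0 0 c - Λ 0 0 0 = 0)
    (hanti : ∀ a b : V, br a b - br a a + br b a = br b b) :
    (∀ a b c : V,
      br (br a b) c - br (br a a) a + br (br b c) a - br (br b b) b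
        + br (br c a) b = br (br c c) c) ↔
    (∀ a b c : V,
      Λ a b c =
        br a a - br (br c c) c + br (br b c) (br b c) - br (br a a) a
          + br (br c c) b - br (br b b) b + br (br a a) b) := by
  -- From affine antisymmetry the bilinear part is alternating.
  have halt : ∀ x : V, B x x = 0 := by
    intro x
    have h := hanti x 0
    simp only [hbr, map_zero, LinearMap.zero_apply] at h
    abel_nf at h
    rw [neg_one_smul, add_eq_left] at h
    exact neg_eq_zero.mp h
  have hsk : ∀ x y : V, B x y = -(B y x) := by
    intro x y
    have h := halt (x + y)
    simp only [map_add, LinearMap.add_apply, halt] at h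
    rw [eq_neg_iff_add_eq_zero]
    rw [zero_add, add_zero] at h
    rw [add_comm] at h
    exact h
  -- Key identity: the Leibnizian minus the Lie-type expression equals the
  -- defect of the affine Jacobi identity.
  have key : ∀ a b c : V,
      (br a (br b c) - br (br a b) c + br (br a c) b)
      - (br a a - br (br c c) c + br (br b c) (br b c) - br (br a a) a
          + br (br c c) b - br (br b b) b + br (br a a) b)
      = br (br c c) c - (br (br a b) c - br (br a a) a + br (br b c) a
          - br (br b b) b + br (br c a) b) := by
    intro a b c
    simp only [hbr, map_add, LinearMap.add_apply, halt, LinearMap.zero_apply, zero_add,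
      add_zero]
    rw [hsk a (B b c), hsk a (lam b), hsk a (mu c), hsk a s,
        hsk (lam b) (B b c), hsk (mu c) (B b c), hsk s (B b c),
        hsk (mu c) (lam b), hsk s (lam b), hsk s (mu c),
        hsk c a, map_neg, LinearMap.neg_apply, map_neg]
    abel
  constructor
  · intro hj a b c
    have k := key a b c
    have j := hj a b c
    rw [hΛ]
    rw [j, sub_self] at k
    exact sub_eq_zero.mp k
  · intro hl a b c
    have k := key a b c
    have l := hl a b c
    rw [hΛ] at l
    rw [l, sub_self] at k
    exact (sub_eq_zero.mp k.symm).symm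
end
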